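/- arXiv:2412.15927 — 4 statements merged into one kernel-verified Lean document; each statement's English description precedes it below -/
import Mathlib

section
/- Let G = K_{3,3} with bipartition X = {x_1,x_2,x_3}, Y = {y_1,y_2,y_3}. For every 3-assignment L for G and every request r of L with nonempty domain D, there exists a proper L-coloring f of G that satisfies at least |D|/2 of the vertex requests, i.e., f(v) = r(v) for at least |D|/2 vertices v in D. -/
open Finset

/-- `f` is a proper `L`-coloring of `G`: every vertex gets a color from its list and
adjacent vertices get different colors. -/
def properListColoring {V : Type*} (G : SimpleGraph V) (L : V → Finset ℕ) (f : V → ℕ) : Prop :=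
  (∀ v, f v ∈ L v) ∧ ∀ u v, G.Adj u v → f u ≠ f v


lemma not_sub2 {s : Finset ℕ} (hs : s.card = 3) (p q : ℕ) : ¬ s ⊆ ({p, q} : Finset ℕ) := by
  intro h
  have h1 := card_le_card h
  have h2 : ({p, q} : Finset ℕ).card ≤ 2 := (card_insert_le _ _).trans (by simp)
  omega

lemma pick2 {s : Finset ℕ} (hs : s.card = 3) (x y : ℕ) : ∃ t ∈ s, t ≠ x ∧ t ≠ y := by
  by_contra h
  push_neg at h
  exact not_sub2 hs x y (fun t ht => by
    by_cases hx : t = x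
    · simp [hx]
    · simp [h t ht hx])

lemma badStruct {s : Finset ℕ} (hs : s.card = 3) {x y z : ℕ}
    (h : ∀ t ∈ s, t = x ∨ t = y ∨ t = z) :
    x ∈ s ∧ y ∈ s ∧ z ∈ s ∧ x ≠ y ∧ x ≠ z ∧ y ≠ z := by
  have hsub : s ⊆ {x, y, z} := fun t ht => by simpa using h t ht
  have hc3 : ({x, y, z} : Finset ℕ).card ≤ s.card := by
    rw [hs]
    refine (card_insert_le _ _).trans ?_
    have := card_insert_le y ({z} : Finset ℕ)
    simp at this ⊢
    omega
  have heq : s = {x, y, z} := eq_of_subset_of_card_le hsub hc3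
  refine ⟨by rw [heq]; simp, by rw [heq]; simp, by rw [heq]; simp, ?_, ?_, ?_⟩
  · rintro rfl
    exact not_sub2 hs x z (fun t ht => by rcases h t ht with h' | h' | h' <;> simp [h'])
  · rintro rfl
    exact not_sub2 hs x y (fun t ht => by rcases h t ht with h' | h' | h' <;> simp [h'])
  · rintro rfl
    exact not_sub2 hs x y (fun t ht => by rcases h t ht with h' | h' | h' <;> simp [h'])

lemma fin3_cover (p0 p1 p2 : Fin 3) (h01 : p0 ≠ p1) (h02 : p0 ≠ p2) (h12 : p1 ≠ p2) :
    ∀ i : Fin 3, i = p0 ∨ i = p1 ∨ i = p2 := by revert p0 p1 p2; decide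

lemma fin3_four (a b c d : Fin 3) :
    a = b ∨ a = c ∨ a = d ∨ b = c ∨ b = d ∨ c = d := by
  revert a b c d; decide

lemma fin3_others (p : Fin 3) : ∃ q r, p ≠ q ∧ p ≠ r ∧ q ≠ r := by revert p; decide

def KeyGoal (A B : Fin 3 → Finset ℕ) (IX IY : Finset (Fin 3)) (c d : Fin 3 → ℕ) : Prop :=
  ∃ a b : Fin 3 → ℕ, (∀ i, a i ∈ A i) ∧ (∀ j, b j ∈ B j) ∧ (∀ i j, a i ≠ b j) ∧
    IX.card + IY.card ≤ 2 * ((IX.filter fun i => a i = c i).card + (IY.filter fun j => b j = d j).card)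

lemma build {A B : Fin 3 → Finset ℕ} {IX IY : Finset (Fin 3)} {c d : Fin 3 → ℕ}
    (a : Fin 3 → ℕ) (ha : ∀ i, a i ∈ A i)
    (SX SY : Finset (Fin 3)) (hSX : SX ⊆ IX) (hSY : SY ⊆ IY)
    (haX : ∀ i ∈ SX, a i = c i)
    (hbY : ∀ j ∈ SY, d j ∈ B j ∧ ∀ i, d j ≠ a i)
    (hGood : ∀ j, ∃ t ∈ B j, ∀ i, t ≠ a i)
    (hcard : IX.card + IY.card ≤ 2 * (SX.card + SY.card)) :
    KeyGoal A B IX IY c d := by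
  choose t ht1 ht2 using hGood
  refine ⟨a, fun j => if j ∈ SY then d j else t j, ha, ?_, ?_, ?_⟩
  · intro j
    by_cases h : j ∈ SY
    · simpa [h] using (hbY j h).1
    · simpa [h] using ht1 j
  · intro i j
    by_cases h : j ∈ SY
    · simpa [h] using ((hbY j h).2 i).symm
    · simpa [h] using (ht2 j i).symm
  · have h1 : SX ⊆ IX.filter fun i => a i = c i :=
      fun i hi => mem_filter.mpr ⟨hSX hi, haX i hi⟩
    have h2 : SY ⊆ IY.filter fun j => (if j ∈ SY then d j else t j) = d j :=
      fun j hj => mem_filter.mpr ⟨hSY hj, by simp [hj]⟩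
    have c1 := card_le_card h1
    have c2 := card_le_card h2
    show IX.card + IY.card ≤ 2 * ((IX.filter fun i => a i = c i).card +
      (IY.filter fun j => (if j ∈ SY then d j else t j) = d j).card)
    omega

lemma seedA {A B : Fin 3 → Finset ℕ} (hA : ∀ i, (A i).card = 3) (hB : ∀ j, (B j).card = 3)
    {i0 i1 i2 : Fin 3} (h01 : i0 ≠ i1) (h02 : i0 ≠ i2) (h12 : i1 ≠ i2)
    {u : ℕ} (hu : u ∈ A i0) :
    ∃ a : Fin 3 → ℕ, (∀ i, a i ∈ A i) ∧ a i0 = u ∧ ∀ j, ∃ t ∈ B j, ∀ i, t ≠ a i := by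
  obtain ⟨v1, hv1A, hv1u, -⟩ := pick2 (hA i1) u u
  by_cases Hw : ∃ w ∈ A i2, ∀ j, ∃ t ∈ B j, t ≠ u ∧ t ≠ v1 ∧ t ≠ w
  · obtain ⟨w, hwA, hG⟩ := Hw
    refine ⟨fun i => if i = i0 then u else if i = i1 then v1 else w, ?_, by simp, ?_⟩
    · intro i
      rcases fin3_cover i0 i1 i2 h01 h02 h12 i with rfl | rfl | rfl
      · simpa using hu
      · simpa [Ne.symm h01] using hv1A
      · simpa [Ne.symm h02, Ne.symm h12] using hwA
    · intro j
      obtain ⟨t, htB, ht1, ht2, ht3⟩ := hG j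
      refine ⟨t, htB, fun i => ?_⟩
      rcases fin3_cover i0 i1 i2 h01 h02 h12 i with rfl | rfl | rfl
      · simpa using ht1
      · simpa [Ne.symm h01] using ht2
      · simpa [Ne.symm h02, Ne.symm h12] using ht3
  · push_neg at Hw
    have Hw' : ∀ w ∈ A i2, ∃ j, ∀ t ∈ B j, t = u ∨ t = v1 ∨ t = w := by
      intro w hw
      obtain ⟨j, hj⟩ := Hw w hw
      exact ⟨j, fun t ht => by have := hj t ht; tauto⟩
    obtain ⟨w1, w2, w3, d12, d13, d23, hAeq⟩ := Finset.card_eq_three.mp (hA i2)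
    have hw1 : w1 ∈ A i2 := by rw [hAeq]; simp
    have hw2 : w2 ∈ A i2 := by rw [hAeq]; simp
    have hw3 : w3 ∈ A i2 := by rw [hAeq]; simp
    obtain ⟨ja, hja⟩ := Hw' w1 hw1
    obtain ⟨jb, hjb⟩ := Hw' w2 hw2
    obtain ⟨jc, hjc⟩ := Hw' w3 hw3
    obtain ⟨huja, hvja, hwja, huv, huw1, hvw1⟩ := badStruct (hB ja) hja
    obtain ⟨hujb, hvjb, hwjb, -, huw2, hvw2⟩ := badStruct (hB jb) hjb
    obtain ⟨hujc, hvjc, hwjc, -, huw3, hvw3⟩ := badStruct (hB jc) hjc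
    have hab : ja ≠ jb := by
      rintro rfl; rcases hja w2 hwjb with h | h | h
      exacts [huw2 h.symm, hvw2 h.symm, d12 h.symm]
    have hac : ja ≠ jc := by
      rintro rfl; rcases hja w3 hwjc with h | h | h
      exacts [huw3 h.symm, hvw3 h.symm, d13 h.symm]
    have hbc : jb ≠ jc := by
      rintro rfl; rcases hjb w3 hwjc with h | h | h
      exacts [huw3 h.symm, hvw3 h.symm, d23 h.symm]
    have hv1all : ∀ j, v1 ∈ B j := by
      intro j
      rcases fin3_cover ja jb jc hab hac hbc j with rfl | rfl | rfl <;> assumption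
    obtain ⟨v1', hv1'A, hv1'u, hv1'v⟩ := pick2 (hA i1) u v1
    refine ⟨fun i => if i = i0 then u else if i = i1 then v1' else w1, ?_, by simp, ?_⟩
    · intro i
      rcases fin3_cover i0 i1 i2 h01 h02 h12 i with rfl | rfl | rfl
      · simpa using hu
      · simpa [Ne.symm h01] using hv1'A
      · simpa [Ne.symm h02, Ne.symm h12] using hw1
    · intro j
      refine ⟨v1, hv1all j, fun i => ?_⟩
      rcases fin3_cover i0 i1 i2 h01 h02 h12 i with rfl | rfl | rfl
      · simpa using hv1u
      · simpa [Ne.symm h01] using Ne.symm hv1'v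
      · simpa [Ne.symm h02, Ne.symm h12] using hvw1

lemma forced3 {B : Fin 3 → Finset ℕ} (hB : ∀ j, (B j).card = 3) {x y z e1 e2 : ℕ}
    (h0 : ∃ j, ∀ t ∈ B j, t = x ∨ t = y ∨ t = z)
    (h1 : ∃ j, ∀ t ∈ B j, t = x ∨ t = y ∨ t = e1)
    (h2 : ∃ j, ∀ t ∈ B j, t = x ∨ t = y ∨ t = e2)
    (hz1 : z ≠ e1) (hz2 : z ≠ e2) (he : e1 ≠ e2) :
    ∃ jz, ∀ j, x ∈ B j ∧ y ∈ B j ∧ (z ∈ B j → j = jz) ∧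
      ∀ t ∈ B j, t = x ∨ t = y ∨ t = z ∨ t = e1 ∨ t = e2 := by
  obtain ⟨j0, hj0⟩ := h0
  obtain ⟨ja, hja⟩ := h1
  obtain ⟨jb, hjb⟩ := h2
  obtain ⟨hx0, hy0, hz0, hxy, hxz, hyz⟩ := badStruct (hB j0) hj0
  obtain ⟨hxa, hya, hea, -, hxe1, hye1⟩ := badStruct (hB ja) hja
  obtain ⟨hxb, hyb, heb, -, hxe2, hye2⟩ := badStruct (hB jb) hjb
  have h0a : j0 ≠ ja := by
    rintro rfl; rcases hja z hz0 with h | h | h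
    exacts [hxz h.symm, hyz h.symm, hz1 h]
  have h0b : j0 ≠ jb := by
    rintro rfl; rcases hjb z hz0 with h | h | h
    exacts [hxz h.symm, hyz h.symm, hz2 h]
  have hab : ja ≠ jb := by
    rintro rfl; rcases hjb e1 hea with h | h | h
    exacts [hxe1 h.symm, hye1 h.symm, he h]
  refine ⟨j0, fun j => ?_⟩
  rcases fin3_cover j0 ja jb h0a h0b hab j with rfl | rfl | rfl
  · exact ⟨hx0, hy0, fun _ => rfl, fun t ht => by rcases hj0 t ht with h | h | h <;> tauto⟩
  · refine ⟨hxa, hya, fun hzj => ?_, fun t ht => by rcases hja t ht with h | h | h <;> tauto⟩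
    rcases hja z hzj with h | h | h
    exacts [absurd h.symm hxz, absurd h.symm hyz, absurd h hz1]
  · refine ⟨hxb, hyb, fun hzj => ?_, fun t ht => by rcases hjb t ht with h | h | h <;> tauto⟩
    rcases hjb z hzj with h | h | h
    exacts [absurd h.symm hxz, absurd h.symm hyz, absurd h hz2]

lemma caseBcore {A B : Fin 3 → Finset ℕ} (hA : ∀ i, (A i).card = 3) (hB : ∀ j, (B j).card = 3)
    {IX IY : Finset (Fin 3)} {c d : Fin 3 → ℕ}
    (hIXu : IX = univ) (hu : ∀ i, c i ∈ A i) (hd : ∀ j ∈ IY, d j ∈ B j)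
    (hIY3 : IY.card ≤ 3)
    {p0 p1 p2 : Fin 3} (h01 : p0 ≠ p1) (h02 : p0 ≠ p2) (h12 : p1 ≠ p2)
    (hc01 : c p0 ≠ c p1) (hc02 : c p0 ≠ c p2) (hc12 : c p1 ≠ c p2)
    (hS0 : ∃ j, ∀ t ∈ B j, t = c p0 ∨ t = c p1 ∨ t = c p2)
    {j1 j2 : Fin 3} (hj1 : j1 ∈ IY) (hj2 : j2 ∈ IY) (hj12 : j1 ≠ j2)
    (hd1 : d j1 = c p0)
    (hd2 : d j2 = c p0 ∨ d j2 = c p1 ∨ d j2 = c p2) :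
    KeyGoal A B IX IY c d := by
  have hIXcard : IX.card = 3 := by rw [hIXu]; simp
  by_cases He : ∃ e ∈ A p0, e ≠ c p0 ∧ ∀ j, ∃ t ∈ B j, t ≠ c p1 ∧ t ≠ c p2 ∧ t ≠ e
  · obtain ⟨e, heA, hec, hG⟩ := He
    refine build (fun i => if i = p1 then c p1 else if i = p2 then c p2 else e) ?_
      {p1, p2} {j1} (by rw [hIXu]; exact subset_univ _) (by simpa using hj1) ?_ ?_ ?_ ?_
    · intro i
      rcases fin3_cover p1 p2 p0 h12 (Ne.symm h01) (Ne.symm h02) i with h | h | h <;> rw [h]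
      · simpa using hu p1
      · simpa [Ne.symm h12] using hu p2
      · simpa [h01, h02] using heA
    · intro i hi
      rcases mem_insert.mp hi with h | hi
      · rw [h]; simp
      · rw [mem_singleton.mp hi]; simp [Ne.symm h12]
    · intro j hj
      rw [mem_singleton.mp hj, hd1]
      refine ⟨by rw [← hd1]; exact hd j1 hj1, fun i => ?_⟩
      rcases fin3_cover p1 p2 p0 h12 (Ne.symm h01) (Ne.symm h02) i with h | h | h <;> rw [h]
      · simpa using hc01
      · simpa [Ne.symm h12] using hc02
      · simpa [h01, h02] using Ne.symm hec
    · intro j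
      obtain ⟨t, htB, ht1, ht2, ht3⟩ := hG j
      refine ⟨t, htB, fun i => ?_⟩
      rcases fin3_cover p1 p2 p0 h12 (Ne.symm h01) (Ne.symm h02) i with h | h | h <;> rw [h]
      · simpa using ht1
      · simpa [Ne.symm h12] using ht2
      · simpa [h01, h02] using ht3
    · rw [hIXcard, card_pair h12, card_singleton]
      omega
  · push_neg at He
    have He' : ∀ e ∈ A p0, e ≠ c p0 → ∃ j, ∀ t ∈ B j, t = c p1 ∨ t = c p2 ∨ t = e := by
      intro e heA hec
      obtain ⟨j, hj⟩ := He e heA hec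
      exact ⟨j, fun t ht => by have := hj t ht; tauto⟩
    have herase : ((A p0).erase (c p0)).card = 2 := by
      rw [card_erase_of_mem (hu p0), hA p0]
    obtain ⟨e1, e2, he12, heq⟩ := Finset.card_eq_two.mp herase
    have he1 : e1 ∈ A p0 ∧ e1 ≠ c p0 := by
      have : e1 ∈ (A p0).erase (c p0) := by rw [heq]; simp
      exact ⟨mem_of_mem_erase this, ne_of_mem_erase this⟩
    have he2 : e2 ∈ A p0 ∧ e2 ≠ c p0 := by
      have : e2 ∈ (A p0).erase (c p0) := by rw [heq]; simp
      exact ⟨mem_of_mem_erase this, ne_of_mem_erase this⟩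
    obtain ⟨jz, hF⟩ := forced3 hB
      (⟨hS0.choose, fun t ht => by have := hS0.choose_spec t ht; tauto⟩ :
        ∃ j, ∀ t ∈ B j, t = c p1 ∨ t = c p2 ∨ t = c p0)
      (He' e1 he1.1 he1.2) (He' e2 he2.1 he2.2)
      (Ne.symm he1.2) (Ne.symm he2.2) he12
    have hj1z : j1 = jz := (hF j1).2.2.1 (by rw [← hd1]; exact hd j1 hj1)
    have hzj2 : c p0 ∉ B j2 := by
      intro h
      exact hj12 (hj1z.trans ((hF j2).2.2.1 h).symm)
    have hd2' : d j2 = c p1 ∨ d j2 = c p2 := by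
      rcases hd2 with h | h | h
      · exact absurd (h ▸ hd j2 hj2) hzj2
      · exact Or.inl h
      · exact Or.inr h
    have main : ∀ q1 q2 : Fin 3, q1 ≠ q2 → p0 ≠ q1 → p0 ≠ q2 → c p0 ≠ c q1 → c p0 ≠ c q2 →
        c q1 ≠ c q2 → (∀ j, c q1 ∈ B j) → d j2 = c q1 → KeyGoal A B IX IY c d := by
      intro q1 q2 hq12 hpq1 hpq2 hcpq1 hcpq2 hcq12 hq1all hdq
      obtain ⟨e', he'A, he'c, -⟩ := pick2 (hA q1) (c q1) (c q1)
      refine build (fun i => if i = p0 then c p0 else if i = q2 then c q2 else e') ?_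
        {p0, q2} {j2} (by rw [hIXu]; exact subset_univ _) (by simpa using hj2) ?_ ?_ ?_ ?_
      · intro i
        rcases fin3_cover p0 q2 q1 hpq2 hpq1 (Ne.symm hq12) i with h | h | h <;> rw [h]
        · simpa using hu p0
        · simpa [Ne.symm hpq2] using hu q2
        · simpa [Ne.symm hpq1, hq12] using he'A
      · intro i hi
        rcases mem_insert.mp hi with h | hi
        · rw [h]; simp
        · rw [mem_singleton.mp hi]; simp [Ne.symm hpq2]
      · intro j hj
        rw [mem_singleton.mp hj, hdq]
        refine ⟨by rw [← hdq]; exact hd j2 hj2, fun i => ?_⟩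
        rcases fin3_cover p0 q2 q1 hpq2 hpq1 (Ne.symm hq12) i with h | h | h <;> rw [h]
        · simpa using Ne.symm hcpq1
        · simpa [Ne.symm hpq2] using hcq12
        · simpa [Ne.symm hpq1, hq12] using Ne.symm he'c
      · intro j
        refine ⟨c q1, hq1all j, fun i => ?_⟩
        rcases fin3_cover p0 q2 q1 hpq2 hpq1 (Ne.symm hq12) i with h | h | h <;> rw [h]
        · simpa using Ne.symm hcpq1
        · simpa [Ne.symm hpq2] using hcq12
        · simpa [Ne.symm hpq1, hq12] using Ne.symm he'c
      · rw [hIXcard, card_pair hpq2, card_singleton]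
        omega
    rcases hd2' with hq | hq
    · exact main p1 p2 h12 h01 h02 hc01 hc02 hc12 (fun j => (hF j).1) hq
    · exact main p2 p1 (Ne.symm h12) h02 h01 hc02 hc01 (Ne.symm hc12) (fun j => (hF j).2.1) hq

lemma fin3_third (p q : Fin 3) (h : p ≠ q) : ∃ w, w ≠ p ∧ w ≠ q := by revert p q; decide

lemma keyDX2 {A B : Fin 3 → Finset ℕ} (hA : ∀ i, (A i).card = 3) (hB : ∀ j, (B j).card = 3)
    {IX IY : Finset (Fin 3)} {c d : Fin 3 → ℕ}
    (hc : ∀ i ∈ IX, c i ∈ A i) (hd : ∀ j ∈ IY, d j ∈ B j)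
    (hle : IY.card ≤ IX.card) (h2 : IX.card = 2) : KeyGoal A B IX IY c d := by
  obtain ⟨i1, i2, h12, hIX⟩ := Finset.card_eq_two.mp h2
  obtain ⟨i0, hi01, hi02⟩ := fin3_third i1 i2 h12
  have hu1 : c i1 ∈ A i1 := hc i1 (by rw [hIX]; simp)
  have hu2 : c i2 ∈ A i2 := hc i2 (by rw [hIX]; simp)
  have hcov3 := fin3_cover i1 i2 i0 h12 (Ne.symm hi01) (Ne.symm hi02)
  by_cases HW : ∃ w ∈ A i0, ∀ j, ∃ t ∈ B j, t ≠ c i1 ∧ t ≠ c i2 ∧ t ≠ w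
  · obtain ⟨w, hwA, hG⟩ := HW
    refine build (fun i => if i = i1 then c i1 else if i = i2 then c i2 else w) ?_
      {i1, i2} ∅ (by simp [hIX]) (empty_subset _) ?_ (by simp) ?_ ?_
    · intro i
      rcases hcov3 i with h | h | h <;> rw [h]
      · simpa using hu1
      · simpa [Ne.symm h12] using hu2
      · simpa [hi01, hi02] using hwA
    · intro i hi
      rcases mem_insert.mp hi with h | hi
      · rw [h]; simp
      · rw [mem_singleton.mp hi]; simp [Ne.symm h12]
    · intro j
      obtain ⟨t, htB, ht1, ht2, ht3⟩ := hG j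
      refine ⟨t, htB, fun i => ?_⟩
      rcases hcov3 i with h | h | h <;> rw [h]
      · simpa using ht1
      · simpa [Ne.symm h12] using ht2
      · simpa [hi01, hi02] using ht3
    · rw [h2, card_pair h12, card_empty]
      omega
  · push_neg at HW
    have HW' : ∀ w ∈ A i0, ∃ j, ∀ t ∈ B j, t = c i1 ∨ t = c i2 ∨ t = w := by
      intro w hw
      obtain ⟨j, hj⟩ := HW w hw
      exact ⟨j, fun t ht => by have := hj t ht; tauto⟩
    obtain ⟨w1, w2, w3, d12, d13, d23, hAeq⟩ := Finset.card_eq_three.mp (hA i0)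
    have hw1 : w1 ∈ A i0 := by rw [hAeq]; simp
    have hw2 : w2 ∈ A i0 := by rw [hAeq]; simp
    have hw3 : w3 ∈ A i0 := by rw [hAeq]; simp
    obtain ⟨ja, hja⟩ := HW' w1 hw1
    obtain ⟨jb, hjb⟩ := HW' w2 hw2
    obtain ⟨jc, hjc⟩ := HW' w3 hw3
    obtain ⟨h1a, h2a, hwa, hcc, h1w1, h2w1⟩ := badStruct (hB ja) hja
    obtain ⟨h1b, h2b, hwb, -, h1w2, h2w2⟩ := badStruct (hB jb) hjb
    obtain ⟨h1c, h2c, hwc, -, h1w3, h2w3⟩ := badStruct (hB jc) hjc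
    have hab : ja ≠ jb := by
      rintro rfl; rcases hjb w1 hwa with h | h | h
      exacts [h1w1 h.symm, h2w1 h.symm, d12 h]
    have hac : ja ≠ jc := by
      rintro rfl; rcases hjc w1 hwa with h | h | h
      exacts [h1w1 h.symm, h2w1 h.symm, d13 h]
    have hbc : jb ≠ jc := by
      rintro rfl; rcases hjc w2 hwb with h | h | h
      exacts [h1w2 h.symm, h2w2 h.symm, d23 h]
    have hcov := fin3_cover ja jb jc hab hac hbc
    have hu1all : ∀ j, c i1 ∈ B j := by
      intro j; rcases hcov j with h | h | h <;> rw [h] <;> assumption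
    have hu2all : ∀ j, c i2 ∈ B j := by
      intro j; rcases hcov j with h | h | h <;> rw [h] <;> assumption
    by_cases hIY0 : IY.card = 0
    · obtain ⟨e, heA, heu, -⟩ := pick2 (hA i2) (c i2) (c i2)
      refine build (fun i => if i = i1 then c i1 else if i = i2 then e else w1) ?_
        {i1} ∅ (by simp [hIX]) (empty_subset _) ?_ (by simp) ?_ ?_
      · intro i
        rcases hcov3 i with h | h | h <;> rw [h]
        · simpa using hu1
        · simpa [Ne.symm h12] using heA
        · simpa [hi01, hi02] using hw1
      · intro i hi
        rw [mem_singleton.mp hi]; simp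
      · intro j
        refine ⟨c i2, hu2all j, fun i => ?_⟩
        rcases hcov3 i with h | h | h <;> rw [h]
        · simpa using Ne.symm hcc
        · simpa [Ne.symm h12] using Ne.symm heu
        · simpa [hi01, hi02] using h2w1
      · rw [h2, hIY0, card_singleton, card_empty]
    · obtain ⟨js, hjs⟩ := Finset.card_pos.mp (show 0 < IY.card by omega)
      have hdj : d js ∈ B js := hd js hjs
      have hds : d js = c i1 ∨ d js = c i2 ∨ d js = w1 ∨ d js = w2 ∨ d js = w3 := by
        rcases hcov js with h | h | h
        · rcases hja (d js) (by rw [← h]; exact hdj) with h' | h' | h' <;> tauto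
        · rcases hjb (d js) (by rw [← h]; exact hdj) with h' | h' | h' <;> tauto
        · rcases hjc (d js) (by rw [← h]; exact hdj) with h' | h' | h' <;> tauto
      have hIY2 : IY.card ≤ 2 := by omega
      have wc : ∀ wk wm : ℕ, wm ∈ A i0 → wk ≠ wm → c i1 ≠ wk → c i1 ≠ wm → c i2 ≠ wm →
          d js = wk → KeyGoal A B IX IY c d := by
        intro wk wm hwmA hkm h1k h1m h2m hq
        obtain ⟨e, heA, heu2, heuk⟩ := pick2 (hA i2) (c i2) wk
        refine build (fun i => if i = i1 then c i1 else if i = i2 then e else wm) ?_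
          {i1} {js} (by simp [hIX]) (by simpa using hjs) ?_ ?_ ?_ ?_
        · intro i
          rcases hcov3 i with h | h | h <;> rw [h]
          · simpa using hu1
          · simpa [Ne.symm h12] using heA
          · simpa [hi01, hi02] using hwmA
        · intro i hi
          rw [mem_singleton.mp hi]; simp
        · intro j hj
          rw [mem_singleton.mp hj, hq]
          refine ⟨hq ▸ hdj, fun i => ?_⟩
          rcases hcov3 i with h | h | h <;> rw [h]
          · simpa using Ne.symm h1k
          · simpa [Ne.symm h12] using Ne.symm heuk
          · simpa [hi01, hi02] using hkm
        · intro j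
          refine ⟨c i2, hu2all j, fun i => ?_⟩
          rcases hcov3 i with h | h | h <;> rw [h]
          · simpa using Ne.symm hcc
          · simpa [Ne.symm h12] using Ne.symm heu2
          · simpa [hi01, hi02] using h2m
        · rw [h2, card_singleton, card_singleton]
          omega
      rcases hds with hq | hq | hq | hq | hq
      · obtain ⟨e, heA, heu, -⟩ := pick2 (hA i1) (c i1) (c i1)
        refine build (fun i => if i = i1 then e else if i = i2 then c i2 else w1) ?_
          {i2} {js} (by simp [hIX]) (by simpa using hjs) ?_ ?_ ?_ ?_
        · intro i
          rcases hcov3 i with h | h | h <;> rw [h]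
          · simpa using heA
          · simpa [Ne.symm h12] using hu2
          · simpa [hi01, hi02] using hw1
        · intro i hi
          rw [mem_singleton.mp hi]; simp [Ne.symm h12]
        · intro j hj
          rw [mem_singleton.mp hj, hq]
          refine ⟨hq ▸ hdj, fun i => ?_⟩
          rcases hcov3 i with h | h | h <;> rw [h]
          · simpa using Ne.symm heu
          · simpa [Ne.symm h12] using hcc
          · simpa [hi01, hi02] using h1w1
        · intro j
          refine ⟨c i1, hu1all j, fun i => ?_⟩
          rcases hcov3 i with h | h | h <;> rw [h]
          · simpa using Ne.symm heu
          · simpa [Ne.symm h12] using hcc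
          · simpa [hi01, hi02] using h1w1
        · rw [h2, card_singleton, card_singleton]
          omega
      · obtain ⟨e, heA, heu, -⟩ := pick2 (hA i2) (c i2) (c i2)
        refine build (fun i => if i = i1 then c i1 else if i = i2 then e else w1) ?_
          {i1} {js} (by simp [hIX]) (by simpa using hjs) ?_ ?_ ?_ ?_
        · intro i
          rcases hcov3 i with h | h | h <;> rw [h]
          · simpa using hu1
          · simpa [Ne.symm h12] using heA
          · simpa [hi01, hi02] using hw1
        · intro i hi
          rw [mem_singleton.mp hi]; simp
        · intro j hj
          rw [mem_singleton.mp hj, hq]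
          refine ⟨hq ▸ hdj, fun i => ?_⟩
          rcases hcov3 i with h | h | h <;> rw [h]
          · simpa using Ne.symm hcc
          · simpa [Ne.symm h12] using Ne.symm heu
          · simpa [hi01, hi02] using h2w1
        · intro j
          refine ⟨c i2, hu2all j, fun i => ?_⟩
          rcases hcov3 i with h | h | h <;> rw [h]
          · simpa using Ne.symm hcc
          · simpa [Ne.symm h12] using Ne.symm heu
          · simpa [hi01, hi02] using h2w1
        · rw [h2, card_singleton, card_singleton]
          omega
      · exact wc w1 w2 hw2 d12 h1w1 h1w2 h2w2 hq
      · exact wc w2 w1 hw1 (Ne.symm d12) h1w2 h1w1 h2w1 hq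
      · exact wc w3 w1 hw1 (Ne.symm d13) h1w3 h1w1 h2w1 hq


lemma caseAcontra {B : Fin 3 → Finset ℕ} (hB : ∀ j, (B j).card = 3) {c0 c1 c2 ea eb ec : ℕ}
    (hea2 : ea ≠ c2) (heb1 : eb ≠ c1) (hec0 : ec ≠ c0)
    (h0 : ∃ j, ∀ t ∈ B j, t = c0 ∨ t = c1 ∨ t = c2)
    (ha : ∃ j, ∀ t ∈ B j, t = c0 ∨ t = c1 ∨ t = ea)
    (hb : ∃ j, ∀ t ∈ B j, t = c0 ∨ t = eb ∨ t = c2)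
    (hc : ∃ j, ∀ t ∈ B j, t = ec ∨ t = c1 ∨ t = c2) : False := by
  obtain ⟨j0, hj0⟩ := h0
  obtain ⟨ja, hja⟩ := ha
  obtain ⟨jb, hjb⟩ := hb
  obtain ⟨jc, hjc⟩ := hc
  obtain ⟨hc0B, hc1B, hc2B, hc01, hc02, hc12⟩ := badStruct (hB j0) hj0
  obtain ⟨h0a, h1a, heaB, -, h0ea, h1ea⟩ := badStruct (hB ja) hja
  obtain ⟨h0b, hebB, h2b, h0eb, -, heb2⟩ := badStruct (hB jb) hjb
  obtain ⟨hecB, h1c, h2c, hec1, hec2, -⟩ := badStruct (hB jc) hjc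
  have d0a : j0 ≠ ja := by
    rintro rfl; rcases hja c2 hc2B with h | h | h
    exacts [hc02 h.symm, hc12 h.symm, hea2 h.symm]
  have d0b : j0 ≠ jb := by
    rintro rfl; rcases hj0 eb hebB with h | h | h
    exacts [h0eb h.symm, heb1 h, heb2 h]
  have d0c : j0 ≠ jc := by
    rintro rfl; rcases hj0 ec hecB with h | h | h
    exacts [hec0 h, hec1 h, hec2 h]
  have dab : ja ≠ jb := by
    rintro rfl; rcases hja c2 h2b with h | h | h
    exacts [hc02 h.symm, hc12 h.symm, hea2 h.symm]
  have dac : ja ≠ jc := by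
    rintro rfl; rcases hja c2 h2c with h | h | h
    exacts [hc02 h.symm, hc12 h.symm, hea2 h.symm]
  have dbc : jb ≠ jc := by
    rintro rfl; rcases hjb c1 h1c with h | h | h
    exacts [hc01 h.symm, heb1 h.symm, hc12 h]
  rcases fin3_four j0 ja jb jc with h | h | h | h | h | h
  exacts [d0a h, d0b h, d0c h, dab h, dac h, dbc h]


set_option maxHeartbeats 800000 in
lemma keyDX3 {A B : Fin 3 → Finset ℕ} (hA : ∀ i, (A i).card = 3) (hB : ∀ j, (B j).card = 3)
    {IX IY : Finset (Fin 3)} {c d : Fin 3 → ℕ}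
    (hc : ∀ i ∈ IX, c i ∈ A i) (hd : ∀ j ∈ IY, d j ∈ B j)
    (hle : IY.card ≤ IX.card) (h3 : IX.card = 3) : KeyGoal A B IX IY c d := by
  have hIXu : IX = univ := eq_univ_of_card IX (by rw [h3]; simp)
  have hu : ∀ i, c i ∈ A i := fun i => hc i (by rw [hIXu]; exact mem_univ i)
  have hIY3 : IY.card ≤ 3 := by omega
  have ne01 : (0 : Fin 3) ≠ 1 := by decide
  have ne02 : (0 : Fin 3) ≠ 2 := by decide
  have ne12 : (1 : Fin 3) ≠ 2 := by decide
  have ne10 : (1 : Fin 3) ≠ 0 := by decide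
  have ne20 : (2 : Fin 3) ≠ 0 := by decide
  have ne21 : (2 : Fin 3) ≠ 1 := by decide
  have hcov012 := fin3_cover 0 1 2 ne01 ne02 ne12
  by_cases HP : ∀ j, ∃ t ∈ B j, t ≠ c 0 ∧ t ≠ c 1 ∧ t ≠ c 2
  · refine build c hu IX ∅ (Finset.Subset.refl _) (empty_subset _) (fun i _ => rfl) (by simp) ?_ ?_
    · intro j
      obtain ⟨t, htB, ht0, ht1, ht2⟩ := HP j
      refine ⟨t, htB, fun i => ?_⟩
      rcases hcov012 i with h | h | h <;> rw [h] <;> assumption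
    · rw [card_empty, h3]
      omega
  · push_neg at HP
    obtain ⟨j0, hj0'⟩ := HP
    have hj0 : ∀ t ∈ B j0, t = c 0 ∨ t = c 1 ∨ t = c 2 := fun t ht => by
      have := hj0' t ht; tauto
    obtain ⟨hc0B, hc1B, hc2B, hc01, hc02, hc12⟩ := badStruct (hB j0) hj0
    by_cases hdy1 : IY.card ≤ 1
    · by_cases H2 : ∃ e ∈ A 2, e ≠ c 2 ∧ ∀ j, ∃ t ∈ B j, t ≠ c 0 ∧ t ≠ c 1 ∧ t ≠ e
      · obtain ⟨e, heA, hec, hG⟩ := H2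
        refine build (fun i => if i = 0 then c 0 else if i = 1 then c 1 else e) ?_
          {0, 1} ∅ (by rw [hIXu]; exact subset_univ _) (empty_subset _) ?_ (by simp) ?_ ?_
        · intro i
          rcases hcov012 i with h | h | h <;> rw [h]
          · simpa using hu 0
          · simpa [ne10] using hu 1
          · simpa [ne20, ne21] using heA
        · intro i hi
          rcases mem_insert.mp hi with h | hi
          · rw [h]; simp
          · rw [mem_singleton.mp hi]; simp [ne10]
        · intro j
          obtain ⟨t, htB, ht0, ht1, hte⟩ := hG j
          refine ⟨t, htB, fun i => ?_⟩
          rcases hcov012 i with h | h | h <;> rw [h]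
          · simpa using ht0
          · simpa [ne10] using ht1
          · simpa [ne20, ne21] using hte
        · rw [card_empty, card_pair ne01, h3]
          omega
      · push_neg at H2
        have H2' : ∀ e ∈ A 2, e ≠ c 2 → ∃ j, ∀ t ∈ B j, t = c 0 ∨ t = c 1 ∨ t = e := by
          intro e he hne
          obtain ⟨j, hj⟩ := H2 e he hne
          exact ⟨j, fun t ht => by have := hj t ht; tauto⟩
        have herase : ((A 2).erase (c 2)).card = 2 := by
          rw [card_erase_of_mem (hu 2), hA 2]
        obtain ⟨e1, e2, he12, heq⟩ := Finset.card_eq_two.mp herase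
        have he1 : e1 ∈ A 2 ∧ e1 ≠ c 2 := by
          have : e1 ∈ (A 2).erase (c 2) := by rw [heq]; simp
          exact ⟨mem_of_mem_erase this, ne_of_mem_erase this⟩
        have he2 : e2 ∈ A 2 ∧ e2 ≠ c 2 := by
          have : e2 ∈ (A 2).erase (c 2) := by rw [heq]; simp
          exact ⟨mem_of_mem_erase this, ne_of_mem_erase this⟩
        obtain ⟨jz, hF⟩ := forced3 hB ⟨j0, hj0⟩ (H2' e1 he1.1 he1.2) (H2' e2 he2.1 he2.2)
          (Ne.symm he1.2) (Ne.symm he2.2) he12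
        obtain ⟨e', he'A, he'c, -⟩ := pick2 (hA 1) (c 1) (c 1)
        refine build (fun i => if i = 0 then c 0 else if i = 2 then c 2 else e') ?_
          {0, 2} ∅ (by rw [hIXu]; exact subset_univ _) (empty_subset _) ?_ (by simp) ?_ ?_
        · intro i
          rcases hcov012 i with h | h | h <;> rw [h]
          · simpa using hu 0
          · simpa [ne10, ne12] using he'A
          · simpa [ne20] using hu 2
        · intro i hi
          rcases mem_insert.mp hi with h | hi
          · rw [h]; simp
          · rw [mem_singleton.mp hi]; simp [ne20]
        · intro j
          refine ⟨c 1, (hF j).2.1, fun i => ?_⟩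
          rcases hcov012 i with h | h | h <;> rw [h]
          · simpa using Ne.symm hc01
          · simpa [ne10, ne12] using Ne.symm he'c
          · simpa [ne20] using hc12
        · rw [card_empty, card_pair ne02, h3]
          omega
    · by_cases hall : ∀ j ∈ IY, d j = c 0 ∨ d j = c 1 ∨ d j = c 2
      · obtain ⟨j1, hj1, j2, hj2, hj12⟩ := Finset.one_lt_card.mp (show 1 < IY.card by omega)
        rcases hall j1 hj1 with hq | hq | hq
        · exact caseBcore hA hB hIXu hu hd hIY3 ne01 ne02 ne12 hc01 hc02 hc12
            ⟨j0, hj0⟩ hj1 hj2 hj12 hq (hall j2 hj2)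
        · exact caseBcore hA hB hIXu hu hd hIY3 ne10 ne12 ne02 (Ne.symm hc01) hc12 hc02
            ⟨j0, fun t ht => by have := hj0 t ht; tauto⟩ hj1 hj2 hj12 hq
            (by have := hall j2 hj2; tauto)
        · exact caseBcore hA hB hIXu hu hd hIY3 ne20 ne21 ne01 (Ne.symm hc02) (Ne.symm hc12) hc01
            ⟨j0, fun t ht => by have := hj0 t ht; tauto⟩ hj1 hj2 hj12 hq
            (by have := hall j2 hj2; tauto)
      · push_neg at hall
        obtain ⟨js, hjs, hq0, hq1, hq2⟩ := hall
        have hdjs : d js ∈ B js := hd js hjs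
        by_cases H2 : ∃ e ∈ A 2, e ≠ c 2 ∧ e ≠ d js ∧ ∀ j, ∃ t ∈ B j, t ≠ c 0 ∧ t ≠ c 1 ∧ t ≠ e
        · obtain ⟨e, heA, hec, hed, hG⟩ := H2
          refine build (fun i => if i = 0 then c 0 else if i = 1 then c 1 else e) ?_
            {0, 1} {js} (by rw [hIXu]; exact subset_univ _) (by simpa using hjs) ?_ ?_ ?_ ?_
          · intro i
            rcases hcov012 i with h | h | h <;> rw [h]
            · simpa using hu 0
            · simpa [ne10] using hu 1
            · simpa [ne20, ne21] using heA
          · intro i hi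
            rcases mem_insert.mp hi with h | hi
            · rw [h]; simp
            · rw [mem_singleton.mp hi]; simp [ne10]
          · intro j hj
            rw [mem_singleton.mp hj]
            refine ⟨hdjs, fun i => ?_⟩
            rcases hcov012 i with h | h | h <;> rw [h]
            · simpa using hq0
            · simpa [ne10] using hq1
            · simpa [ne20, ne21] using Ne.symm hed
          · intro j
            obtain ⟨t, htB, ht0, ht1, hte⟩ := hG j
            refine ⟨t, htB, fun i => ?_⟩
            rcases hcov012 i with h | h | h <;> rw [h]
            · simpa using ht0
            · simpa [ne10] using ht1
            · simpa [ne20, ne21] using hte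
          · rw [card_singleton, card_pair ne01, h3]
            omega
        · by_cases H1 : ∃ e ∈ A 1, e ≠ c 1 ∧ e ≠ d js ∧ ∀ j, ∃ t ∈ B j, t ≠ c 0 ∧ t ≠ e ∧ t ≠ c 2
          · obtain ⟨e, heA, hec, hed, hG⟩ := H1
            refine build (fun i => if i = 0 then c 0 else if i = 2 then c 2 else e) ?_
              {0, 2} {js} (by rw [hIXu]; exact subset_univ _) (by simpa using hjs) ?_ ?_ ?_ ?_
            · intro i
              rcases hcov012 i with h | h | h <;> rw [h]
              · simpa using hu 0
              · simpa [ne10, ne12] using heA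
              · simpa [ne20] using hu 2
            · intro i hi
              rcases mem_insert.mp hi with h | hi
              · rw [h]; simp
              · rw [mem_singleton.mp hi]; simp [ne20]
            · intro j hj
              rw [mem_singleton.mp hj]
              refine ⟨hdjs, fun i => ?_⟩
              rcases hcov012 i with h | h | h <;> rw [h]
              · simpa using hq0
              · simpa [ne10, ne12] using Ne.symm hed
              · simpa [ne20] using hq2
            · intro j
              obtain ⟨t, htB, ht0, hte, ht2⟩ := hG j
              refine ⟨t, htB, fun i => ?_⟩
              rcases hcov012 i with h | h | h <;> rw [h]
              · simpa using ht0
              · simpa [ne10, ne12] using hte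
              · simpa [ne20] using ht2
            · rw [card_singleton, card_pair ne02, h3]
              omega
          · by_cases H0 : ∃ e ∈ A 0, e ≠ c 0 ∧ e ≠ d js ∧
                ∀ j, ∃ t ∈ B j, t ≠ e ∧ t ≠ c 1 ∧ t ≠ c 2
            · obtain ⟨e, heA, hec, hed, hG⟩ := H0
              refine build (fun i => if i = 1 then c 1 else if i = 2 then c 2 else e) ?_
                {1, 2} {js} (by rw [hIXu]; exact subset_univ _) (by simpa using hjs) ?_ ?_ ?_ ?_
              · intro i
                rcases hcov012 i with h | h | h <;> rw [h]
                · simpa [ne01, ne02] using heA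
                · simpa using hu 1
                · simpa [ne21] using hu 2
              · intro i hi
                rcases mem_insert.mp hi with h | hi
                · rw [h]; simp
                · rw [mem_singleton.mp hi]; simp [ne21]
              · intro j hj
                rw [mem_singleton.mp hj]
                refine ⟨hdjs, fun i => ?_⟩
                rcases hcov012 i with h | h | h <;> rw [h]
                · simpa [ne01, ne02] using Ne.symm hed
                · simpa using hq1
                · simpa [ne21] using hq2
              · intro j
                obtain ⟨t, htB, hte, ht1, ht2⟩ := hG j
                refine ⟨t, htB, fun i => ?_⟩
                rcases hcov012 i with h | h | h <;> rw [h]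
                · simpa [ne01, ne02] using hte
                · simpa using ht1
                · simpa [ne21] using ht2
              · rw [card_singleton, card_pair ne12, h3]
                omega
            · exfalso
              push_neg at H2 H1 H0
              obtain ⟨ea, heaA, hea2, head⟩ := pick2 (hA 2) (c 2) (d js)
              obtain ⟨ja, hja'⟩ := H2 ea heaA hea2 head
              obtain ⟨eb, hebA, heb1, hebd⟩ := pick2 (hA 1) (c 1) (d js)
              obtain ⟨jb, hjb'⟩ := H1 eb hebA heb1 hebd
              obtain ⟨ec, hecA, hec0, hecd⟩ := pick2 (hA 0) (c 0) (d js)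
              obtain ⟨jc, hjc'⟩ := H0 ec hecA hec0 hecd
              exact caseAcontra hB hea2 heb1 hec0 ⟨j0, hj0⟩
                ⟨ja, fun t ht => by have := hja' t ht; tauto⟩
                ⟨jb, fun t ht => by have := hjb' t ht; tauto⟩
                ⟨jc, fun t ht => by have := hjc' t ht; tauto⟩

lemma key {A B : Fin 3 → Finset ℕ} (hA : ∀ i, (A i).card = 3) (hB : ∀ j, (B j).card = 3)
    {IX IY : Finset (Fin 3)} {c d : Fin 3 → ℕ}
    (hc : ∀ i ∈ IX, c i ∈ A i) (hd : ∀ j ∈ IY, d j ∈ B j)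
    (hle : IY.card ≤ IX.card) : KeyGoal A B IX IY c d := by
  have hIX3 : IX.card ≤ 3 := by
    have := card_le_univ IX
    simpa using this
  by_cases h0 : IX.card = 0
  · obtain ⟨u, hu, -⟩ := pick2 (hA 0) 0 0
    obtain ⟨a, ha, -, hGood⟩ := seedA hA hB (show (0 : Fin 3) ≠ 1 by decide)
      (show (0 : Fin 3) ≠ 2 by decide) (show (1 : Fin 3) ≠ 2 by decide) hu
    refine build a ha ∅ ∅ (empty_subset _) (empty_subset _) (by simp) (by simp) hGood ?_
    rw [card_empty]
    omega
  by_cases h1 : IX.card = 1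
  · obtain ⟨i0, hIX⟩ := Finset.card_eq_one.mp h1
    obtain ⟨i1, i2, h01, h02, h12⟩ := fin3_others i0
    have hu : c i0 ∈ A i0 := hc i0 (by rw [hIX]; simp)
    obtain ⟨a, ha, hai0, hGood⟩ := seedA hA hB h01 h02 h12 hu
    refine build a ha {i0} ∅ (by simp [hIX]) (empty_subset _) ?_ (by simp) hGood ?_
    · intro i hi
      rw [mem_singleton.mp hi]
      exact hai0
    · rw [card_empty, card_singleton]
      omega
  by_cases h2 : IX.card = 2
  · exact keyDX2 hA hB hc hd hle h2
  · exact keyDX3 hA hB hc hd hle (by omega)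

lemma splitCard (E : Finset (Fin 3 ⊕ Fin 3)) :
    E.card = (univ.filter fun i => Sum.inl i ∈ E).card +
      (univ.filter fun j => Sum.inr j ∈ E).card := by
  classical
  rw [← card_filter_add_card_filter_not (p := fun v => v.isLeft = true)]
  congr 1
  · have h : E.filter (fun v => v.isLeft = true) =
        (univ.filter fun i => Sum.inl i ∈ E).image Sum.inl := by
      ext v
      cases v <;> simp
    rw [h, card_image_of_injective _ Sum.inl_injective]
  · have h : E.filter (fun v => ¬ v.isLeft = true) =
        (univ.filter fun j => Sum.inr j ∈ E).image Sum.inr := by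
      ext v
      cases v <;> simp
    rw [h, card_image_of_injective _ Sum.inr_injective]

theorem stmt_14 (L : Fin 3 ⊕ Fin 3 → Finset ℕ) (hL : ∀ v, (L v).card = 3)
    (D : Finset (Fin 3 ⊕ Fin 3)) (hD : D.Nonempty)
    (r : Fin 3 ⊕ Fin 3 → ℕ) (hr : ∀ v ∈ D, r v ∈ L v) :
    ∃ f, properListColoring (completeBipartiteGraph (Fin 3) (Fin 3)) L f ∧
      D.card ≤ 2 * (D.filter fun v => f v = r v).card := by
  classical
  set IX : Finset (Fin 3) := univ.filter fun i => Sum.inl i ∈ D with hIXdef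
  set IY : Finset (Fin 3) := univ.filter fun j => Sum.inr j ∈ D with hIYdef
  have hcX : ∀ i ∈ IX, r (Sum.inl i) ∈ L (Sum.inl i) := fun i hi =>
    hr _ (mem_filter.mp hi).2
  have hcY : ∀ j ∈ IY, r (Sum.inr j) ∈ L (Sum.inr j) := fun j hj =>
    hr _ (mem_filter.mp hj).2
  have main : ∀ a b : Fin 3 → ℕ, (∀ i, a i ∈ L (Sum.inl i)) → (∀ j, b j ∈ L (Sum.inr j)) →
      (∀ i j, a i ≠ b j) →
      IX.card + IY.card ≤ 2 * ((IX.filter fun i => a i = r (Sum.inl i)).card +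
        (IY.filter fun j => b j = r (Sum.inr j)).card) →
      ∃ f, properListColoring (completeBipartiteGraph (Fin 3) (Fin 3)) L f ∧
        D.card ≤ 2 * (D.filter fun v => f v = r v).card := by
    intro a b ha hb hab hcount
    refine ⟨Sum.elim a b, ⟨fun v => ?_, fun u v huv => ?_⟩, ?_⟩
    · cases v with
      | inl i => exact ha i
      | inr j => exact hb j
    · cases u with
      | inl i =>
        cases v with
        | inl i' => simp at huv
        | inr j => exact hab i j
      | inr j =>
        cases v with
        | inl i => exact (hab i j).symm
        | inr j' => simp at huv
    · rw [splitCard D, splitCard (D.filter fun v => Sum.elim a b v = r v)]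
      have e1 : (univ.filter fun i => Sum.inl i ∈ D.filter fun v => Sum.elim a b v = r v) =
          IX.filter fun i => a i = r (Sum.inl i) := by
        ext i
        simp only [hIXdef, mem_filter, mem_univ, true_and, Sum.elim_inl]
      have e2 : (univ.filter fun j => Sum.inr j ∈ D.filter fun v => Sum.elim a b v = r v) =
          IY.filter fun j => b j = r (Sum.inr j) := by
        ext j
        simp only [hIYdef, mem_filter, mem_univ, true_and, Sum.elim_inr]
      rw [e1, e2]
      exact hcount
  rcases le_total IY.card IX.card with hle | hle
  · obtain ⟨a, b, ha, hb, hab, hcount⟩ := key (fun i => hL _) (fun j => hL _) hcX hcY hle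
    exact main a b ha hb hab hcount
  · obtain ⟨b, a, hb, ha, hba, hcount⟩ := key (fun j => hL _) (fun i => hL _) hcY hcX hle
    refine main a b ha hb (fun i j => (hba j i).symm) ?_
    have r1 : (IY.filter fun j => b j = (fun j' => r (Sum.inr j')) j) =
        IY.filter fun j => b j = r (Sum.inr j) := rfl
    have r2 : (IX.filter fun i => a i = (fun i' => r (Sum.inl i')) i) =
        IX.filter fun i => a i = r (Sum.inl i) := rfl
    rw [r1, r2] at hcount
    omega
end

section
/- Let G = K_{3,n} with n ∈ {7,8}, with partite sets X = {x_1,x_2,x_3} and Y = {y_1,...,y_n}. There exists a 3-assignment L for G and a request r of L with domain X such that every proper L-coloring of G satisfies at most one of the three vertex requests. Explicitly: L(x_1)={1,4,5}, L(x_2)={2,6,7}, L(x_3)={3,8,9}, L(y_1)={1,2,3}, L(y_2)={1,2,8}, L(y_3)={1,2,9}, L(y_4)={1,3,6}, L(y_5)={1,3,7}, L(y_6)={2,3,4}, L(y_7)={2,3,5}, and L(y_8)={1,2,3} if n = 8, with r(x_i) = i for i ∈ {1,2,3}; then no proper L-coloring f has f(x_i) = i for two or more indices i. -/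
open Finset

def L3n (n : ℕ) : Fin 3 ⊕ Fin n → Finset ℕ := fun v =>
  match v with
  | Sum.inl i => if i.val = 0 then {1, 4, 5} else if i.val = 1 then {2, 6, 7} else {3, 8, 9}
  | Sum.inr j =>
    if j.val = 0 then {1, 2, 3} else if j.val = 1 then {1, 2, 8} else
    if j.val = 2 then {1, 2, 9} else if j.val = 3 then {1, 3, 6} else
    if j.val = 4 then {1, 3, 7} else if j.val = 5 then {2, 3, 4} else
    if j.val = 6 then {2, 3, 5} else {1, 2, 3}

set_option maxHeartbeats 1000000 in
theorem stmt_15 (n : ℕ) (hn : n = 7 ∨ n = 8) :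
    ∀ f, properListColoring (completeBipartiteGraph (Fin 3) (Fin n)) (L3n n) f →
      ((Finset.univ : Finset (Fin 3)).filter fun i => f (Sum.inl i) = i.val + 1).card ≤ 1 := by
  have h7 : 7 ≤ n := by omega
  rintro f ⟨hmem, hadj⟩
  have nadj : ∀ (i : Fin 3) (j : Fin n), f (Sum.inl i) ≠ f (Sum.inr j) := fun i j =>
    hadj _ _ (by simp)
  have hx1 := hmem (Sum.inl 0)
  have hx2 := hmem (Sum.inl 1)
  have hx3 := hmem (Sum.inl 2)
  have hy1 := hmem (Sum.inr ⟨0, by omega⟩)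
  have hy2 := hmem (Sum.inr ⟨1, by omega⟩)
  have hy3 := hmem (Sum.inr ⟨2, by omega⟩)
  have hy4 := hmem (Sum.inr ⟨3, by omega⟩)
  have hy5 := hmem (Sum.inr ⟨4, by omega⟩)
  have hy6 := hmem (Sum.inr ⟨5, by omega⟩)
  have hy7 := hmem (Sum.inr ⟨6, by omega⟩)
  simp [L3n] at hx1 hx2 hx3 hy1 hy2 hy3 hy4 hy5 hy6 hy7
  have h12 : ¬(f (Sum.inl 0) = 1 ∧ f (Sum.inl 1) = 2) := by
    rintro ⟨e1, e2⟩
    have n10 := nadj 0 ⟨0, by omega⟩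
    have n11 := nadj 0 ⟨1, by omega⟩
    have n12 := nadj 0 ⟨2, by omega⟩
    have n20 := nadj 1 ⟨0, by omega⟩
    have n21 := nadj 1 ⟨1, by omega⟩
    have n22 := nadj 1 ⟨2, by omega⟩
    have n30 := nadj 2 ⟨0, by omega⟩
    have n31 := nadj 2 ⟨1, by omega⟩
    have n32 := nadj 2 ⟨2, by omega⟩
    clear hmem hadj nadj hn hx1 hx2 hy4 hy5 hy6 hy7
    rcases hx3 with h3 | h3 | h3 <;> rcases hy1 with a | a | a <;>
      rcases hy2 with b | b | b <;> rcases hy3 with c | c | c <;> omega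
  have h13 : ¬(f (Sum.inl 0) = 1 ∧ f (Sum.inl 2) = 3) := by
    rintro ⟨e1, e2⟩
    have n10 := nadj 0 ⟨0, by omega⟩
    have n13 := nadj 0 ⟨3, by omega⟩
    have n14 := nadj 0 ⟨4, by omega⟩
    have n20 := nadj 1 ⟨0, by omega⟩
    have n23 := nadj 1 ⟨3, by omega⟩
    have n24 := nadj 1 ⟨4, by omega⟩
    have n30 := nadj 2 ⟨0, by omega⟩
    have n33 := nadj 2 ⟨3, by omega⟩
    have n34 := nadj 2 ⟨4, by omega⟩
    clear hmem hadj nadj hn hx1 hx3 hy2 hy3 hy6 hy7 h12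
    rcases hx2 with h2 | h2 | h2 <;> rcases hy1 with a | a | a <;>
      rcases hy4 with b | b | b <;> rcases hy5 with c | c | c <;> omega
  have h23 : ¬(f (Sum.inl 1) = 2 ∧ f (Sum.inl 2) = 3) := by
    rintro ⟨e1, e2⟩
    have n10 := nadj 0 ⟨0, by omega⟩
    have n15 := nadj 0 ⟨5, by omega⟩
    have n16 := nadj 0 ⟨6, by omega⟩
    have n20 := nadj 1 ⟨0, by omega⟩
    have n25 := nadj 1 ⟨5, by omega⟩
    have n26 := nadj 1 ⟨6, by omega⟩
    have n30 := nadj 2 ⟨0, by omega⟩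
    have n35 := nadj 2 ⟨5, by omega⟩
    have n36 := nadj 2 ⟨6, by omega⟩
    clear hmem hadj nadj hn hx2 hx3 hy2 hy3 hy4 hy5 h12 h13
    rcases hx1 with h1 | h1 | h1 <;> rcases hy1 with a | a | a <;>
      rcases hy6 with b | b | b <;> rcases hy7 with c | c | c <;> omega
  clear hmem hadj nadj hn h7 hx1 hx2 hx3 hy1 hy2 hy3 hy4 hy5 hy6 hy7
  rw [Finset.card_le_one]
  intro a ha b hb
  simp only [Finset.mem_filter, Finset.mem_univ, true_and] at ha hb
  fin_cases a <;> fin_cases b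
  · rfl
  · exact absurd ⟨ha, hb⟩ h12
  · exact absurd ⟨ha, hb⟩ h13
  · exact absurd ⟨hb, ha⟩ h12
  · rfl
  · exact absurd ⟨ha, hb⟩ h23
  · exact absurd ⟨hb, ha⟩ h13
  · exact absurd ⟨hb, ha⟩ h23
  · rfl
end

section
/- Let G = K_{n,n} with n ≥ 4 and bipartition X, Y each of size n. For every n-assignment L for G and every request r of L with nonempty domain D, there is a proper L-coloring of G that satisfies at least |D|/2 of the vertex requests. -/
/-!
Color first the side `X` carrying at least half of the requests. A coloring `g` of `X` extends to
`Y`, honouring every request at `y` whose color `g` avoids, unless some list `L y` equals `g '' X`;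
then `g` is injective, and each `y` blocks at most one color set.

Color `⌈|D|/2⌉` requested vertices of `X` as requested. If two vertices of `X` remain free, the
`n²` choices for them cannot all be blocked. If one vertex `v` remains free and all `n` choices at
`v` are blocked, they are matched bijectively with `Y`, so every list on `Y` contains all the
colors used outside `v`; recoloring one requested vertex then frees every list and can honour a
request on `Y` instead. If all of `X` is requested and blocked, recolor a single vertex: these
colorings have pairwise distinct color sets, at least `n - 1` of them avoid the request at some
`u ∈ D ∩ Y`, and neither `u` nor the vertex blocking `g` blocks any of them.
-/

open Finset

open Function

section Update

variable {ι γ : Type*} [Fintype ι] [DecidableEq ι] [DecidableEq γ] {g : ι → γ} {w : ι} {a c : γ}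

theorem apply_notMem_image_update (hinj : Injective g) (hc : c ≠ g w) :
    g w ∉ univ.image (update g w c) := by
  simp only [mem_image, mem_univ, true_and, not_exists]
  intro z hz
  rcases eq_or_ne z w with rfl | hzw
  · exact hc (by simpa using hz)
  · exact hzw (hinj (by simpa [update_of_ne hzw] using hz))

theorem notMem_image_update (ha : a ∉ univ.image g) (hc : c ≠ a) :
    a ∉ univ.image (update g w c) := by
  simp only [mem_image, mem_univ, true_and, not_exists] at ha ⊢
  intro z hz
  rcases eq_or_ne z w with rfl | hzw
  · exact hc (by simpa using hz)
  · exact ha z (by simpa [update_of_ne hzw] using hz)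

theorem eq_of_image_update_eq {c' : γ} (hinj : Injective (update g w c))
    (himg : univ.image (update g w c) = univ.image (update g w c')) : c = c' := by
  obtain ⟨z, -, hz⟩ := mem_image.1 (himg ▸ mem_image.2 ⟨w, mem_univ w, by simp⟩ :
    c ∈ univ.image (update g w c'))
  rcases eq_or_ne z w with rfl | hzw
  · simpa using hz.symm
  · refine absurd (hinj ?_) hzw
    simpa [update_of_ne hzw] using hz

theorem eq_and_eq_of_image_update_eq (hinj : Injective g) {w' : ι} {c' : γ} (hc' : c' ≠ g w')
    (hinj' : Injective (update g w c))
    (himg : univ.image (update g w c) = univ.image (update g w' c')) : w = w' ∧ c = c' := by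
  rcases eq_or_ne w w' with rfl | hww'
  · exact ⟨rfl, eq_of_image_update_eq hinj' himg⟩
  · refine absurd ?_ (apply_notMem_image_update hinj hc')
    rw [← himg]
    exact mem_image.2 ⟨w', mem_univ w', update_of_ne hww'.symm _ _⟩

end Update

section LeftColorings

variable {α β : Type*} [Fintype α] (L : α ⊕ β → Finset ℕ)

def LeavesRoom (g : α → ℕ) : Prop :=
  ∀ b, ¬ L (Sum.inr b) ⊆ univ.image g

variable {L} {g : α → ℕ}

theorem exists_eq_image_of_not_leavesRoom (hL : ∀ b, Fintype.card α ≤ #(L (Sum.inr b)))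
    (h : ¬ LeavesRoom L g) : ∃ b, L (Sum.inr b) = univ.image g := by
  simp only [LeavesRoom, not_forall, not_not] at h
  obtain ⟨b, hb⟩ := h
  exact ⟨b, eq_of_subset_of_card_le hb (card_image_le.trans (hL b))⟩

theorem injective_of_not_leavesRoom (hL : ∀ b, Fintype.card α ≤ #(L (Sum.inr b)))
    (h : ¬ LeavesRoom L g) : Injective g := by
  obtain ⟨b, hb⟩ := exists_eq_image_of_not_leavesRoom hL h
  have hcard : #(univ.image g) = #(univ : Finset α) :=
    card_image_le.antisymm (by rw [← hb, card_univ]; exact hL b)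
  simpa using card_image_iff.1 hcard

/-- Sending each color `c` of `v` to a right vertex whose list is the color set of
`update g v c` is injective, hence onto. -/
theorem apply_mem_of_forall_not_leavesRoom_update [DecidableEq α] [Fintype β] {n : ℕ}
    (hL : ∀ v, #(L v) = n) (hα : Fintype.card α = n) (hβ : Fintype.card β = n) {v x : α}
    (hbad : ∀ c ∈ L (Sum.inl v), ¬ LeavesRoom L (update g v c)) (hx : x ≠ v) (b : β) :
    g x ∈ L (Sum.inr b) := by
  have hL' : ∀ b, Fintype.card α ≤ #(L (Sum.inr b)) := by simp [hL, hα]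
  choose y hy using fun c (hc : c ∈ L (Sum.inl v)) =>
    exists_eq_image_of_not_leavesRoom hL' (hbad c hc)
  have hyinj : ∀ c c' hc hc', y c hc = y c' hc' → c = c' := fun c c' hc hc' hcc' =>
    eq_of_image_update_eq (injective_of_not_leavesRoom hL' (hbad c hc))
      (by rw [← hy c hc, ← hy c' hc', hcc'])
  obtain ⟨c, hc, rfl⟩ := surj_on_of_inj_on_of_card_le y (fun _ _ => mem_univ _) hyinj
    (by simp [hL, hβ]) b (mem_univ b)
  rw [hy c hc]
  exact mem_image.2 ⟨x, mem_univ x, update_of_ne hx c g⟩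

theorem exists_leavesRoom_update_update [DecidableEq α] [Fintype β] {n : ℕ} (hn : 0 < n)
    (hL : ∀ v, #(L v) = n) (hα : Fintype.card α = n) (hβ : Fintype.card β = n) (g : α → ℕ)
    {v₁ v₂ : α} (hv : v₁ ≠ v₂) : ∃ c₁ ∈ L (Sum.inl v₁), ∃ c₂ ∈ L (Sum.inl v₂),
      LeavesRoom L (update (update g v₁ c₁) v₂ c₂) := by
  by_contra! hbad
  obtain ⟨b⟩ : Nonempty β := Fintype.card_pos_iff.1 (hβ ▸ hn)
  have hsub₁ : L (Sum.inl v₁) ⊆ L (Sum.inr b) := fun c₁ hc₁ => by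
    simpa using apply_mem_of_forall_not_leavesRoom_update hL hα hβ (hbad c₁ hc₁) hv b
  have hsub₂ : L (Sum.inl v₂) ⊆ L (Sum.inr b) := fun c₂ hc₂ => by
    have hbad' : ∀ c₁ ∈ L (Sum.inl v₁), ¬ LeavesRoom L (update (update g v₂ c₂) v₁ c₁) :=
      fun c₁ hc₁ => update_comm hv c₁ c₂ g ▸ hbad c₁ hc₁ c₂ hc₂
    simpa using apply_mem_of_forall_not_leavesRoom_update hL hα hβ hbad' hv.symm b
  have heq : L (Sum.inl v₁) = L (Sum.inl v₂) :=
    (eq_of_subset_of_card_le hsub₁ (by simp [hL])).trans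
      (eq_of_subset_of_card_le hsub₂ (by simp [hL])).symm
  obtain ⟨c, hc⟩ := card_pos.1 ((hL _).symm ▸ hn : 0 < #(L (Sum.inl v₁)))
  have hinj := injective_of_not_leavesRoom (by simp [hL, hα]) (hbad c hc c (heq ▸ hc))
  exact hv (hinj (by simp [update_of_ne hv]))

end LeftColorings

section Counting

variable {α β : Type*} [Fintype α] [Fintype β] {L : α ⊕ β → Finset ℕ}

/-- Each blocked candidate is matched with a right vertex outside `B` whose list is its set of
colors. -/
theorem exists_leavesRoom_of_injOn {ι : Type*} (hL : ∀ b, Fintype.card α ≤ #(L (Sum.inr b)))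
    (P : Finset ι) (G : ι → α → ℕ) (B : Finset β)
    (hB : ∀ p ∈ P, ∀ b ∈ B, ¬ L (Sum.inr b) ⊆ univ.image (G p))
    (hinj : ∀ p ∈ P, ∀ q ∈ P, Injective (G p) → univ.image (G p) = univ.image (G q) → p = q)
    (hcard : Fintype.card β < #P + #B) : ∃ p ∈ P, LeavesRoom L (G p) := by
  classical
  by_contra! hbad
  choose y hy using fun p (hp : p ∈ P) => exists_eq_image_of_not_leavesRoom hL (hbad p hp)
  have hle : #P.attach ≤ #(univ \ B) := by
    refine card_le_card_of_injOn (fun p => y p.1 p.2) (fun p _ => ?_) (fun p _ q _ hpq => ?_)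
    · simpa using fun hb => hB p.1 p.2 _ hb (hy p.1 p.2).le
    · refine Subtype.ext (hinj p.1 p.2 q.1 q.2 (injective_of_not_leavesRoom hL (hbad p.1 p.2)) ?_)
      rw [← hy p.1 p.2, ← hy q.1 q.2]
      exact congrArg (fun b => L (Sum.inr b)) hpq
  rw [card_attach, card_univ_sdiff] at hle
  have := card_le_univ B
  omega

variable [DecidableEq α] {g : α → ℕ}

theorem exists_leavesRoom_update_of_sub_two_lt_card {n : ℕ} (hL : ∀ v, #(L v) = n)
    (hα : Fintype.card α = n) (hβ : Fintype.card β = n) (hinj : Injective g) {b₀ u : β}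
    (hb₀ : L (Sum.inr b₀) = univ.image g) (hu : u ≠ b₀) {c₀ : ℕ} (hc₀ : c₀ ∈ L (Sum.inr u))
    (P : Finset (Σ _ : α, ℕ))
    (hP : ∀ p ∈ P, p.2 ≠ g p.1 ∧ c₀ ∉ univ.image (update g p.1 p.2)) (hcard : n - 2 < #P) :
    ∃ p ∈ P, LeavesRoom L (update g p.1 p.2) := by
  classical
  have hB : ∀ p ∈ P, ∀ b ∈ ({b₀, u} : Finset β),
      ¬ L (Sum.inr b) ⊆ univ.image (update g p.1 p.2) := by
    intro p hp b hb hsub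
    rcases mem_insert.1 hb with rfl | hb
    · exact apply_notMem_image_update hinj (hP p hp).1
        (hsub (hb₀ ▸ mem_image_of_mem g (mem_univ _)))
    · exact (hP p hp).2 (hsub (mem_singleton.1 hb ▸ hc₀))
  refine exists_leavesRoom_of_injOn (by simp [hL, hα]) P _ {b₀, u} hB ?_
    (by rw [card_pair hu.symm]; omega)
  rintro ⟨w, c⟩ - ⟨w', c'⟩ hq hinj' himg
  obtain ⟨rfl, rfl⟩ := eq_and_eq_of_image_update_eq hinj (hP _ hq).1 hinj' himg
  rfl

theorem exists_leavesRoom_update_avoiding {n : ℕ} (hn : 3 ≤ n) (hL : ∀ v, #(L v) = n)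
    (hα : Fintype.card α = n) (hβ : Fintype.card β = n) (hg : ∀ a, g a ∈ L (Sum.inl a))
    (hinj : Injective g) {b₀ u : β} (hb₀ : L (Sum.inr b₀) = univ.image g) (hu : u ≠ b₀)
    {c₀ : ℕ} (hc₀ : c₀ ∈ L (Sum.inr u)) :
    ∃ w, ∃ c ∈ L (Sum.inl w), LeavesRoom L (update g w c) ∧ c₀ ∉ univ.image (update g w c) := by
  by_cases hc₀g : c₀ ∈ univ.image g
  · obtain ⟨w, -, rfl⟩ := mem_image.1 hc₀g
    have hP : ∀ p ∈ ({w} : Finset α).sigma fun w => (L (Sum.inl w)).erase (g w),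
        p.2 ∈ L (Sum.inl p.1) ∧ p.2 ≠ g p.1 ∧ g w ∉ univ.image (update g p.1 p.2) := by
      simp only [mem_sigma, mem_singleton, mem_erase]
      rintro ⟨w', c⟩ ⟨rfl, hne, hc⟩
      exact ⟨hc, hne, apply_notMem_image_update hinj hne⟩
    obtain ⟨p, hp, hroom⟩ := exists_leavesRoom_update_of_sub_two_lt_card hL hα hβ hinj hb₀ hu hc₀
      _ (fun p hp => (hP p hp).2)
      (by rw [card_sigma, sum_singleton, card_erase_of_mem (hg w), hL]; omega)
    exact ⟨p.1, p.2, (hP p hp).1, hroom, (hP p hp).2.2⟩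
  · have hP : ∀ p ∈ univ.sigma fun w => ((L (Sum.inl w)).erase (g w)).erase c₀,
        p.2 ∈ L (Sum.inl p.1) ∧ p.2 ≠ g p.1 ∧ c₀ ∉ univ.image (update g p.1 p.2) := by
      simp only [mem_sigma, mem_univ, true_and, mem_erase]
      rintro ⟨w, c⟩ ⟨hne₀, hne, hc⟩
      exact ⟨hc, hne, notMem_image_update hc₀g hne₀⟩
    have hcard : n - 2 < #(univ.sigma fun w => ((L (Sum.inl w)).erase (g w)).erase c₀) :=
      calc n - 2 < n * (n - 2) := lt_mul_left (by omega) (by omega)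
        _ = ∑ _ : α, (n - 2) := by simp [hα]
        _ ≤ _ := by
          rw [card_sigma]
          gcongr with w
          have h₁ := pred_card_le_card_erase (s := L (Sum.inl w)) (a := g w)
          have h₂ := pred_card_le_card_erase (s := (L (Sum.inl w)).erase (g w)) (a := c₀)
          rw [hL] at h₁
          omega
    obtain ⟨p, hp, hroom⟩ := exists_leavesRoom_update_of_sub_two_lt_card hL hα hβ hinj hb₀ hu hc₀
      _ (fun p hp => (hP p hp).2) hcard
    exact ⟨p.1, p.2, (hP p hp).1, hroom, (hP p hp).2.2⟩

theorem exists_leavesRoom_update_update_avoiding {n : ℕ} (hn : 3 ≤ n) (hL : ∀ v, #(L v) = n)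
    (hα : Fintype.card α = n) (hβ : Fintype.card β = n) {v : α}
    (hbad : ∀ c ∈ L (Sum.inl v), ¬ LeavesRoom L (update g v c)) (c₀ : ℕ) :
    ∃ w ≠ v, ∃ c' ∈ L (Sum.inl v), ∃ c ∈ L (Sum.inl w),
      LeavesRoom L (update (update g v c') w c) ∧
      c₀ ∉ univ.image (update (update g v c') w c) := by
  obtain ⟨c', hc', hc'₀⟩ := exists_mem_ne (s := L (Sum.inl v)) (by rw [hL]; omega) c₀
  set u := update g v c'
  have hinj : Injective u := injective_of_not_leavesRoom (by simp [hL, hα]) (hbad c' hc')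
  obtain ⟨w, hwv, hw⟩ : ∃ w ≠ v, c₀ ∈ univ.image u → u w = c₀ := by
    by_cases h : c₀ ∈ univ.image u
    · obtain ⟨w, -, hw⟩ := mem_image.1 h
      refine ⟨w, ?_, fun _ => hw⟩
      rintro rfl
      exact hc'₀ (by simpa [u] using hw)
    · obtain ⟨w, -, hwv⟩ := exists_mem_ne (s := univ) (by rw [card_univ, hα]; omega) v
      exact ⟨w, hwv, fun h' => absurd h' h⟩
  obtain ⟨c, hc, hcne⟩ := exists_mem_notMem_of_card_lt_card (s := {u w, c₀}) (t := L (Sum.inl w))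
    ((card_le_two).trans_lt (by rw [hL]; omega))
  simp only [mem_insert, mem_singleton, not_or] at hcne
  refine ⟨w, hwv, c', hc', c, hc, fun b hsub => ?_, ?_⟩
  · refine apply_notMem_image_update hinj hcne.1 (hsub ?_)
    simpa [u, update_of_ne hwv] using apply_mem_of_forall_not_leavesRoom_update hL hα hβ hbad hwv b
  · by_cases h : c₀ ∈ univ.image u
    · rw [← hw h]
      exact apply_notMem_image_update hinj hcne.1
    · exact notMem_image_update h hcne.2

end Counting

theorem forall_update_mem {ι γ : Type*} [DecidableEq ι] {s : ι → Finset γ} {g : ι → γ}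
    (hg : ∀ a, g a ∈ s a) {v : ι} {c : γ} (hc : c ∈ s v) : ∀ a, update g v c a ∈ s a :=
  (forall_update_iff g fun a c => c ∈ s a).2 ⟨hc, fun a _ => hg a⟩

section Requests

variable {α β : Type*} [Fintype α] {L : α ⊕ β → Finset ℕ}

/-- The requests met by the left coloring `g` together with a right coloring honouring every
right request whose color `g` does not use. -/
def requestsMet (D : Finset (α ⊕ β)) (r : α ⊕ β → ℕ) (g : α → ℕ) : ℕ :=
  #{a ∈ D.toLeft | g a = r (Sum.inl a)} + #{b ∈ D.toRight | r (Sum.inr b) ∉ univ.image g}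

theorem card_add_card_le_requestsMet {D : Finset (α ⊕ β)} {r : α ⊕ β → ℕ} {g : α → ℕ}
    {S : Finset α} (hS : S ⊆ D.toLeft) (hgS : ∀ a ∈ S, g a = r (Sum.inl a))
    {U : Finset β} (hU : U ⊆ D.toRight) (hgU : ∀ b ∈ U, r (Sum.inr b) ∉ univ.image g) :
    #S + #U ≤ requestsMet D r g := by
  unfold requestsMet
  gcongr
  · exact fun a ha => mem_filter.2 ⟨hS ha, hgS a ha⟩
  · exact fun b hb => mem_filter.2 ⟨hU hb, hgU b hb⟩

theorem exists_properListColoring_of_leavesRoom (D : Finset (α ⊕ β)) (r : α ⊕ β → ℕ)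
    (hr : ∀ v ∈ D, r v ∈ L v) {g : α → ℕ} (hg : ∀ a, g a ∈ L (Sum.inl a))
    (hroom : LeavesRoom L g) :
    ∃ f, properListColoring (completeBipartiteGraph α β) L f ∧
      requestsMet D r g ≤ #{v ∈ D | f v = r v} := by
  have hright : ∀ b, ∃ c ∈ L (Sum.inr b), c ∉ univ.image g ∧
      (r (Sum.inr b) ∈ L (Sum.inr b) → r (Sum.inr b) ∉ univ.image g → c = r (Sum.inr b)) := by
    intro b
    by_cases h : r (Sum.inr b) ∈ L (Sum.inr b) ∧ r (Sum.inr b) ∉ univ.image g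
    · exact ⟨_, h.1, h.2, fun _ _ => rfl⟩
    · obtain ⟨c, hc, hcg⟩ := not_subset.1 (hroom b)
      exact ⟨c, hc, hcg, fun h₁ h₂ => absurd ⟨h₁, h₂⟩ h⟩
  choose k hkL hkg hkr using hright
  refine ⟨Sum.elim g k, ⟨?_, ?_⟩, ?_⟩
  · rintro (a | b)
    exacts [hg a, hkL b]
  · have hne : ∀ a b, g a ≠ k b := fun a b hab => hkg b (hab ▸ mem_image_of_mem g (mem_univ a))
    rintro (a | b) (a' | b') hadj
    · simp at hadj
    · exact hne a b'
    · exact (hne a' b).symm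
    · simp at hadj
  · rw [← card_toLeft_add_card_toRight]
    unfold requestsMet
    gcongr
    · intro a; simp
    · intro b hb
      simp only [mem_filter, mem_toRight] at hb ⊢
      exact ⟨hb.1, hkr b (hr _ hb.1) hb.2⟩

end Requests

section Cases

variable {α β : Type*} [Fintype α] [DecidableEq α] [Fintype β] {L : α ⊕ β → Finset ℕ}
  {D : Finset (α ⊕ β)} {r : α ⊕ β → ℕ} {S : Finset α} {g : α → ℕ} {n : ℕ}

theorem exists_requestsMet_of_one_lt_card_compl (hn : 0 < n) (hL : ∀ v, #(L v) = n)
    (hα : Fintype.card α = n) (hβ : Fintype.card β = n) (hS : S ⊆ D.toLeft)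
    (hg : ∀ a, g a ∈ L (Sum.inl a)) (hgS : ∀ a ∈ S, g a = r (Sum.inl a)) (h2 : 1 < #Sᶜ) :
    ∃ g', (∀ a, g' a ∈ L (Sum.inl a)) ∧ LeavesRoom L g' ∧ #S ≤ requestsMet D r g' := by
  obtain ⟨v₁, hv₁, v₂, hv₂, hv⟩ := one_lt_card.1 h2
  obtain ⟨c₁, hc₁, c₂, hc₂, hroom⟩ := exists_leavesRoom_update_update hn hL hα hβ g hv
  refine ⟨_, forall_update_mem (forall_update_mem hg hc₁) hc₂, hroom, ?_⟩
  have hagree : ∀ a ∈ S, update (update g v₁ c₁) v₂ c₂ a = r (Sum.inl a) := fun a ha => by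
    rw [update_of_ne (ne_of_mem_of_not_mem ha (mem_compl.1 hv₂)),
      update_of_ne (ne_of_mem_of_not_mem ha (mem_compl.1 hv₁)), hgS a ha]
  simpa using card_add_card_le_requestsMet hS hagree (empty_subset _) (by simp)

theorem exists_requestsMet_of_card_compl_eq_one (hn : 3 ≤ n) (hL : ∀ v, #(L v) = n)
    (hα : Fintype.card α = n) (hβ : Fintype.card β = n) (hS : S ⊆ D.toLeft)
    (hg : ∀ a, g a ∈ L (Sum.inl a)) (hgS : ∀ a ∈ S, g a = r (Sum.inl a)) (h1 : #Sᶜ = 1)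
    (hD : D.toRight.Nonempty) :
    ∃ g', (∀ a, g' a ∈ L (Sum.inl a)) ∧ LeavesRoom L g' ∧ #S ≤ requestsMet D r g' := by
  obtain ⟨v, hv⟩ := card_eq_one.1 h1
  have hvS : v ∉ S := mem_compl.1 (hv ▸ mem_singleton_self v)
  have hmemS : ∀ a ≠ v, a ∈ S := fun a hav => by
    by_contra ha
    exact hav (mem_singleton.1 (hv ▸ mem_compl.2 ha))
  by_cases hgood : ∃ c ∈ L (Sum.inl v), LeavesRoom L (update g v c)
  · obtain ⟨c, hc, hroom⟩ := hgood
    refine ⟨_, forall_update_mem hg hc, hroom, ?_⟩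
    have hagree : ∀ a ∈ S, update g v c a = r (Sum.inl a) := fun a ha => by
      rw [update_of_ne (ne_of_mem_of_not_mem ha hvS), hgS a ha]
    simpa using card_add_card_le_requestsMet hS hagree (empty_subset _) (by simp)
  push Not at hgood
  obtain ⟨u, hu⟩ := hD
  obtain ⟨w, hwv, c', hc', c, hc, hroom, hu'⟩ :=
    exists_leavesRoom_update_update_avoiding hn hL hα hβ hgood (r (Sum.inr u))
  refine ⟨_, forall_update_mem (forall_update_mem hg hc') hc, hroom, ?_⟩
  have hagree : ∀ a ∈ S.erase w, update (update g v c') w c a = r (Sum.inl a) := fun a ha => by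
    rw [update_of_ne (ne_of_mem_erase ha),
      update_of_ne (ne_of_mem_of_not_mem (mem_of_mem_erase ha) hvS), hgS a (mem_of_mem_erase ha)]
  have := card_add_card_le_requestsMet ((erase_subset w S).trans hS) hagree
    (singleton_subset_iff.2 hu) (by simpa using hu')
  rw [card_erase_of_mem (hmemS w hwv), card_singleton] at this
  have := card_pos.2 ⟨w, hmemS w hwv⟩
  omega

theorem exists_requestsMet_of_toLeft_eq_univ (hn : 3 ≤ n) (hL : ∀ v, #(L v) = n)
    (hα : Fintype.card α = n) (hβ : Fintype.card β = n) (hr : ∀ v ∈ D, r v ∈ L v)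
    (hX : D.toLeft = univ) (hY : 1 < #D.toRight) :
    ∃ g', (∀ a, g' a ∈ L (Sum.inl a)) ∧ LeavesRoom L g' ∧ n ≤ requestsMet D r g' := by
  have hg : ∀ a, r (Sum.inl a) ∈ L (Sum.inl a) := fun a => hr _ (mem_toLeft.1 (hX ▸ mem_univ a))
  by_cases hroom : LeavesRoom L (fun a => r (Sum.inl a))
  · refine ⟨_, hg, hroom, ?_⟩
    simpa [hα] using card_add_card_le_requestsMet (g := fun a => r (Sum.inl a)) hX.ge
      (fun _ _ => rfl) (empty_subset _) (by simp)
  have hL' : ∀ b, Fintype.card α ≤ #(L (Sum.inr b)) := by simp [hL, hα]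
  obtain ⟨b₀, hb₀⟩ := exists_eq_image_of_not_leavesRoom hL' hroom
  obtain ⟨u, hu, hub₀⟩ := exists_mem_ne hY b₀
  obtain ⟨w, c, hc, hroom', hu'⟩ := exists_leavesRoom_update_avoiding hn hL hα hβ hg
    (injective_of_not_leavesRoom hL' hroom) hb₀ hub₀ (hr _ (mem_toRight.1 hu))
  refine ⟨_, forall_update_mem hg hc, hroom', ?_⟩
  have := card_add_card_le_requestsMet (D := D) (S := univ.erase w) (U := {u}) (by simp [hX])
    (fun a ha => update_of_ne (ne_of_mem_erase ha) _ _) (singleton_subset_iff.2 hu)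
    (by simpa using hu')
  rw [card_erase_of_mem (mem_univ w), card_univ, hα, card_singleton] at this
  omega

end Cases

theorem properListColoring.comp_hom {V W : Type*} {G : SimpleGraph V} {G' : SimpleGraph W}
    {L : W → Finset ℕ} {f : W → ℕ} (hf : properListColoring G' L f) (φ : G →g G') :
    properListColoring G (L ∘ φ) (f ∘ φ) :=
  ⟨fun v => hf.1 (φ v), fun _ _ huv => hf.2 _ _ (φ.map_adj huv)⟩

def completeBipartiteGraphSwap (α β : Type*) :
    completeBipartiteGraph α β →g completeBipartiteGraph β α :=
  ⟨Sum.swap, by rintro (a | b) (a' | b') h <;> simp_all⟩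

section Main

variable {α β : Type*} [Fintype α] [DecidableEq α] [Fintype β] {L : α ⊕ β → Finset ℕ} {n : ℕ}

theorem exists_properListColoring_of_card_toRight_le (hn : 4 ≤ n) (hL : ∀ v, #(L v) = n)
    (hα : Fintype.card α = n) (hβ : Fintype.card β = n) (D : Finset (α ⊕ β))
    (r : α ⊕ β → ℕ) (hr : ∀ v ∈ D, r v ∈ L v) (hside : #D.toRight ≤ #D.toLeft) :
    ∃ f, properListColoring (completeBipartiteGraph α β) L f ∧
      #D ≤ 2 * #{v ∈ D | f v = r v} := by
  have hsum := card_toLeft_add_card_toRight (u := D)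
  have hleft : #D.toLeft ≤ n := hα ▸ card_le_univ _
  obtain ⟨S, hSD, hS⟩ := exists_subset_card_eq (show (#D + 1) / 2 ≤ #D.toLeft by omega)
  have hSc : #Sᶜ = n - #S := by rw [card_compl, hα]
  choose d hd using fun a => card_pos.1 ((hL (Sum.inl a)).symm ▸ (by omega : 0 < n))
  obtain ⟨g₀, hg₀, hg₀S⟩ : ∃ g₀ : α → ℕ, (∀ a, g₀ a ∈ L (Sum.inl a)) ∧
      ∀ a ∈ S, g₀ a = r (Sum.inl a) := by
    refine ⟨fun a => if a ∈ S then r (Sum.inl a) else d a, fun a => ?_, fun a ha => if_pos ha⟩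
    dsimp only
    split_ifs with ha
    exacts [hr _ (mem_toLeft.1 (hSD ha)), hd a]
  obtain ⟨g, hg, hroom, hmet⟩ : ∃ g, (∀ a, g a ∈ L (Sum.inl a)) ∧ LeavesRoom L g ∧
      #D ≤ 2 * requestsMet D r g := by
    obtain h2 | h1 | h0 : 1 < #Sᶜ ∨ #Sᶜ = 1 ∨ #Sᶜ = 0 := by omega
    · obtain ⟨g, hg, hroom, hmet⟩ :=
        exists_requestsMet_of_one_lt_card_compl (by omega) hL hα hβ hSD hg₀ hg₀S h2
      exact ⟨g, hg, hroom, by omega⟩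
    · -- `#D ≥ 2n - 3` and `#D.toLeft ≤ n`, so `n ≥ 4` leaves a request on the right
      obtain ⟨g, hg, hroom, hmet⟩ := exists_requestsMet_of_card_compl_eq_one (by omega) hL hα hβ
        hSD hg₀ hg₀S h1 (card_pos.1 (by omega))
      exact ⟨g, hg, hroom, by omega⟩
    · have hX : D.toLeft = univ := eq_univ_of_card _ (by omega)
      obtain ⟨g, hg, hroom, hmet⟩ :=
        exists_requestsMet_of_toLeft_eq_univ (by omega) hL hα hβ hr hX (by omega)
      exact ⟨g, hg, hroom, by omega⟩
  obtain ⟨f, hf, hfmet⟩ := exists_properListColoring_of_leavesRoom D r hr hg hroom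
  exact ⟨f, hf, hmet.trans (by omega)⟩

theorem exists_properListColoring_card_le_two_mul_card_filter [DecidableEq β] (hn : 4 ≤ n)
    (hL : ∀ v, #(L v) = n) (hα : Fintype.card α = n) (hβ : Fintype.card β = n)
    (D : Finset (α ⊕ β)) (r : α ⊕ β → ℕ) (hr : ∀ v ∈ D, r v ∈ L v) :
    ∃ f, properListColoring (completeBipartiteGraph α β) L f ∧
      #D ≤ 2 * #{v ∈ D | f v = r v} := by
  rcases le_total #D.toRight #D.toLeft with hside | hside
  · exact exists_properListColoring_of_card_toRight_le hn hL hα hβ D r hr hside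
  set e := (Equiv.sumComm α β).toEmbedding
  obtain ⟨f, hf, hcard⟩ := exists_properListColoring_of_card_toRight_le (L := L ∘ Sum.swap) hn
    (fun v => hL _) hβ hα (D.map e) (r ∘ Sum.swap)
    (fun v hv => by obtain ⟨u, hu, rfl⟩ := mem_map.1 hv; simpa [e] using hr u hu)
    (by simpa [e] using hside)
  refine ⟨f ∘ Sum.swap, ?_, ?_⟩
  · have := hf.comp_hom (completeBipartiteGraphSwap α β)
    change properListColoring _ (L ∘ Sum.swap ∘ Sum.swap) (f ∘ Sum.swap) at this
    rwa [Sum.swap_swap_eq, comp_id] at this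
  · simpa [e, filter_map, comp_def] using hcard

end Main

theorem stmt_16_general (n : ℕ) (hn : 4 ≤ n) (L : Fin n ⊕ Fin n → Finset ℕ)
    (hL : ∀ v, (L v).card = n)
    (D : Finset (Fin n ⊕ Fin n))
    (r : Fin n ⊕ Fin n → ℕ) (hr : ∀ v ∈ D, r v ∈ L v) :
    ∃ f, properListColoring (completeBipartiteGraph (Fin n) (Fin n)) L f ∧
      D.card ≤ 2 * (D.filter fun v => f v = r v).card :=
  exists_properListColoring_card_le_two_mul_card_filter hn hL (Fintype.card_fin n)
    (Fintype.card_fin n) D r hr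

theorem stmt_16 (n : ℕ) (hn : 4 ≤ n) (L : Fin n ⊕ Fin n → Finset ℕ)
    (hL : ∀ v, (L v).card = n)
    (D : Finset (Fin n ⊕ Fin n)) (hD : D.Nonempty)
    (r : Fin n ⊕ Fin n → ℕ) (hr : ∀ v ∈ D, r v ∈ L v) :
    ∃ f, properListColoring (completeBipartiteGraph (Fin n) (Fin n)) L f ∧
      D.card ≤ 2 * (D.filter fun v => f v = r v).card :=
  stmt_16_general n hn L hL D r hr
end

section
/- Let G = K_{m,n} with partite sets X of size m and Y of size n, and let k ≥ 2. If K_{m-1,n} is not (k,k-1)-choosable (lists of size k on the part of size m-1 and size k-1 on the part of size n), then there exists a k-assignment L for G and a request r of L with domain a single vertex such that no proper L-coloring of G satisfies the request. -/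
open Finset

theorem stmt_18 (m n k : ℕ) (hm : 1 ≤ m) (hn : 1 ≤ n) (hk : 2 ≤ k)
    (hnot : ¬ ∀ L : Fin (m - 1) ⊕ Fin n → Finset ℕ,
        (∀ x, (L (Sum.inl x)).card = k) → (∀ y, (L (Sum.inr y)).card = k - 1) →
        ∃ f, properListColoring (completeBipartiteGraph (Fin (m - 1)) (Fin n)) L f) :
    ∃ L : Fin m ⊕ Fin n → Finset ℕ, (∀ v, (L v).card = k) ∧
      ∃ v₀, ∃ c ∈ L v₀,
        ¬ ∃ f, properListColoring (completeBipartiteGraph (Fin m) (Fin n)) L f ∧ f v₀ = c := by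
  push_neg at hnot
  obtain ⟨L', hX, hY, hno⟩ := hnot
  set c : ℕ := (Finset.univ.sup fun y : Fin n => (L' (Sum.inr y)).sup id) + 1 with hc
  have hcfresh : ∀ y, c ∉ L' (Sum.inr y) := by
    intro y hy
    have h1 : id c ≤ (L' (Sum.inr y)).sup id := Finset.le_sup hy
    have h2 : (L' (Sum.inr y)).sup id ≤ Finset.univ.sup fun y : Fin n => (L' (Sum.inr y)).sup id :=
      Finset.le_sup (f := fun y : Fin n => (L' (Sum.inr y)).sup id) (Finset.mem_univ y)
    simp only [id] at h1
    omega
  classical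
  refine ⟨fun v =>
    match v with
    | Sum.inl x => if h : x.val = 0 then (Finset.range k).image (· + c)
        else L' (Sum.inl ⟨x.val - 1, by have := x.isLt; omega⟩)
    | Sum.inr y => insert c (L' (Sum.inr y)), ?_, Sum.inl ⟨0, by omega⟩, c, ?_, ?_⟩
  · rintro (x | y)
    · by_cases h : x.val = 0
      · simp only [h, dif_pos]
        rw [Finset.card_image_of_injective _ (add_left_injective c), Finset.card_range]
      · simp only [h, dif_neg, not_false_iff]
        exact hX _
    · simp only
      rw [Finset.card_insert_of_notMem (hcfresh y), hY]
      omega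
  · simp only [dif_pos]
    exact Finset.mem_image.2 ⟨0, Finset.mem_range.2 (by omega), by simp⟩
  · rintro ⟨f, ⟨hmem, hprop⟩, hfc⟩
    apply hno (fun v =>
      match v with
      | Sum.inl x => f (Sum.inl ⟨x.val + 1, by have := x.isLt; omega⟩)
      | Sum.inr y => f (Sum.inr y))
    constructor
    · rintro (x | y)
      · have := hmem (Sum.inl ⟨x.val + 1, by have := x.isLt; omega⟩)
        simp only [dif_neg (Nat.succ_ne_zero x.val)] at this
        simpa using this
      · have hmy := hmem (Sum.inr y)
        simp only at hmy ⊢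
        have hadj : (completeBipartiteGraph (Fin m) (Fin n)).Adj
            (Sum.inl ⟨0, by omega⟩) (Sum.inr y) := by simp
        have hne := hprop _ _ hadj
        rw [hfc] at hne
        rcases Finset.mem_insert.1 hmy with h | h
        · exact absurd h.symm hne
        · exact h
    · rintro (x | y) (x' | y') hadj <;> simp only [completeBipartiteGraph] at hadj <;>
        simp only at hadj ⊢
      · exact absurd hadj (by simp)
      · exact hprop _ _ (by simp)
      · exact hprop _ _ (by simp)
      · exact absurd hadj (by simp)
end
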